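/- (Ambrose's structure theorem.) Let H be a nonzero complex Hilbert space equipped with a continuous bilinear multiplication (x,y) ↦ x·y making H a commutative associative (not necessarily unital) Banach algebra with trivial annihilator, such that for each x ∈ H there exists x* ∈ H with ⟨x·y, z⟩ = ⟨y, x*·z⟩ for all y, z ∈ H. Then H is isomorphic as an H*-algebra to a Hilbert space direct sum of one-dimensional algebras: there exist an index set ι, nonzero complex scalars (λ_i)_{i ∈ ι}, and a unitary isomorphism U : H ≃ lp(fun _ : ι => ℂ) 2 such that (U(x·y))_i = λ_i · (U x)_i · (U y)_i for all x, y ∈ H and all i ∈ ι. -/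

import Mathlib

/-!
The left multiplications `m x` form a commuting family of operators closed under adjoints, so they
generate a commutative C⋆-subalgebra `A` of `H →L[ℂ] H`. For each character `φ` of `A`, the Riesz
theorem gives a vector `g` with `⟪g, x⟫ = φ (m x)`, so `⟪g, ·⟫` is a character of `(H, m)`. Nonzero
such `g` are joint eigenvectors, `m x g = ⟪g, x⟫ • g`, hence mutually orthogonal. A vector orthogonal
to all of them is killed by every character of `A`, so by the injectivity of the Gelfand transform
its left multiplication vanishes, and it is zero. The normalized vectors `g / ‖g‖` therefore form a
Hilbert basis, in whose coordinates multiplication is pointwise with weights `‖g‖`.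
-/

open scoped ComplexConjugate

open StarAlgebra WeakDual

open scoped IsMulCommutative in
theorem StarSubalgebra.isMulCommutative_topologicalClosure_adjoin {R A : Type*} [CommSemiring R]
    [StarRing R] [TopologicalSpace A] [Semiring A] [StarRing A] [IsSemitopologicalSemiring A]
    [ContinuousStar A] [Algebra R A] [StarModule R A] [T2Space A] {s : Set A}
    (hcomm : ∀ a ∈ s, ∀ b ∈ s, a * b = b * a) (hstar : ∀ a ∈ s, star a ∈ s) :
    IsMulCommutative (adjoin R s).topologicalClosure := by
  have := isMulCommutative_adjoin R hcomm fun a ha b hb => hcomm a ha _ (hstar b hb)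
  exact ⟨⟨((adjoin R s).commSemiringTopologicalClosure mul_comm).mul_comm⟩⟩

open scoped IsMulCommutative in
theorem StarSubalgebra.eq_zero_of_forall_characterSpace_apply_eq_zero {E : Type*}
    [CStarAlgebra E] (A : StarSubalgebra ℂ E) [IsClosed (A : Set E)] [IsMulCommutative A]
    {a : A} (h : ∀ φ : characterSpace ℂ A, φ a = 0) : a = 0 := by
  let _ : CommCStarAlgebra A := { mul_comm := mul_comm }
  refine (gelfandTransform_isometry A).injective ?_
  ext φ
  simpa using h φ

theorem orthonormal_normalize {𝕜 ι E : Type*} [RCLike 𝕜] [NormedAddCommGroup E]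
    [InnerProductSpace 𝕜 E] {v : ι → E} (hv : ∀ i, v i ≠ 0)
    (horth : Pairwise fun i j => inner 𝕜 (v i) (v j) = 0) :
    Orthonormal 𝕜 fun i => (‖v i‖⁻¹ : 𝕜) • v i :=
  ⟨fun i => norm_smul_inv_norm (hv i), fun i j hij => by
    simp only [inner_smul_left, inner_smul_right, horth hij, mul_zero]⟩

local notation "⟪" x ", " y "⟫" => @inner ℂ _ _ x y

namespace ContinuousLinearMap

variable {H : Type*} [NormedAddCommGroup H] [InnerProductSpace ℂ H]

def characterVectors (m : H →L[ℂ] H →L[ℂ] H) : Set H :=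
  {g | g ≠ 0 ∧ ∀ x y, ⟪g, m x y⟫ = ⟪g, x⟫ * ⟪g, y⟫}

variable {m : H →L[ℂ] H →L[ℂ] H}

theorem apply_characterVector_eq_smul
    (hadj : ∀ x : H, ∃ xs : H, ∀ y z : H, ⟪m x y, z⟫ = ⟪y, m xs z⟫)
    {g : H} (hg : g ∈ characterVectors m) (x : H) : m x g = ⟪g, x⟫ • g := by
  obtain ⟨xs, hxs⟩ := hadj x
  have hsmul : m x g = conj ⟪g, xs⟫ • g := by
    refine ext_inner_left ℂ fun y => ?_
    rw [inner_smul_right, ← inner_conj_symm, hxs, hg.2, map_mul, inner_conj_symm y g]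
  have hcoeff : conj ⟪g, xs⟫ * ⟪g, g⟫ = ⟪g, x⟫ * ⟪g, g⟫ := by
    rw [← inner_smul_right, ← hsmul, hg.2]
  rw [hsmul, mul_right_cancel₀ (inner_self_ne_zero.mpr hg.1) hcoeff]

theorem inner_characterVectors_eq_zero
    (hadj : ∀ x : H, ∃ xs : H, ∀ y z : H, ⟪m x y, z⟫ = ⟪y, m xs z⟫)
    {e f : H} (he : e ∈ characterVectors m) (hf : f ∈ characterVectors m) (hef : e ≠ f) :
    ⟪e, f⟫ = 0 := by
  by_contra hne
  have hsame : ∀ x, ⟪e, x⟫ = ⟪f, x⟫ := fun x => by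
    refine mul_right_cancel₀ hne ?_
    rw [← he.2, apply_characterVector_eq_smul hadj hf, inner_smul_right]
  have hzero : ⟪e - f, e - f⟫ = 0 := by rw [inner_sub_left, hsame, sub_self]
  exact hef (sub_eq_zero.mp (inner_self_eq_zero.mp hzero))

theorem orthonormal_normalize_characterVectors
    (hadj : ∀ x : H, ∃ xs : H, ∀ y z : H, ⟪m x y, z⟫ = ⟪y, m xs z⟫) :
    Orthonormal ℂ fun g : characterVectors m => (‖(g : H)‖⁻¹ : ℂ) • (g : H) :=
  orthonormal_normalize (fun g => g.2.1) fun e f hef =>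
    inner_characterVectors_eq_zero hadj e.2 f.2 (Subtype.coe_ne_coe.mpr hef)

structure IsCommHStarMul (m : H →L[ℂ] H →L[ℂ] H) : Prop where
  comm : ∀ x y, m x y = m y x
  assoc : ∀ x y z, m (m x y) z = m x (m y z)
  ann : ∀ x, (∀ y, m x y = 0) → x = 0
  adj : ∀ x, ∃ xs, ∀ y z, ⟪m x y, z⟫ = ⟪y, m xs z⟫

variable [CompleteSpace H]

theorem star_apply_mem_range
    (hadj : ∀ x : H, ∃ xs : H, ∀ y z : H, ⟪m x y, z⟫ = ⟪y, m xs z⟫) (x : H) :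
    star (m x) ∈ Set.range m := by
  obtain ⟨xs, hxs⟩ := hadj x
  refine ⟨xs, ?_⟩
  rw [star_eq_adjoint, eq_adjoint_iff]
  intro y z
  rw [← inner_conj_symm, ← hxs, inner_conj_symm]

namespace IsCommHStarMul

theorem eq_zero_of_forall_characterVectors_inner_eq_zero (hm : IsCommHStarMul m) {z : H}
    (hz : ∀ g ∈ characterVectors m, ⟪g, z⟫ = 0) : z = 0 := by
  let A := (adjoin ℂ (Set.range m)).topologicalClosure
  have hA : ∀ x, m x ∈ A := fun x =>
    StarSubalgebra.le_topologicalClosure _ (subset_adjoin ℂ _ ⟨x, rfl⟩)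
  have hmul : ∀ x y, m x * m y = m (m x y) := fun x y => ext fun w => (hm.assoc x y w).symm
  have : IsMulCommutative A := StarSubalgebra.isMulCommutative_topologicalClosure_adjoin
    (by rintro _ ⟨x, rfl⟩ _ ⟨y, rfl⟩; rw [hmul, hmul, hm.comm])
    (by rintro _ ⟨x, rfl⟩; exact star_apply_mem_range hm.adj x)
  have : IsClosed (A : Set (H →L[ℂ] H)) := StarSubalgebra.isClosed_topologicalClosure _
  have hmz : (⟨m z, hA z⟩ : A) = 0 := by
    refine StarSubalgebra.eq_zero_of_forall_characterSpace_apply_eq_zero A fun φ => ?_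
    let g := (InnerProductSpace.toDual ℂ H).symm
      ((toStrongDual (φ : WeakDual ℂ A)).comp (m.codRestrict A.toSubalgebra.toSubmodule hA))
    have hg : ∀ x, ⟪g, x⟫ = φ ⟨m x, hA x⟩ := fun _ => InnerProductSpace.toDual_symm_apply
    rw [← hg]
    by_cases hg0 : g = 0
    · rw [hg0, inner_zero_left]
    refine hz g ⟨hg0, fun x y => ?_⟩
    rw [hg, hg, hg, ← map_mul]
    exact congrArg φ (Subtype.ext (hmul x y).symm)
  exact hm.ann z fun y => by simpa using congrArg (fun T : A => T.1 y) hmz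

noncomputable def characterHilbertBasis (hm : IsCommHStarMul m) :
    HilbertBasis (characterVectors m) ℂ H :=
  HilbertBasis.mkOfOrthogonalEqBot (orthonormal_normalize_characterVectors hm.adj) <| by
    refine (Submodule.eq_bot_iff _).mpr fun z hz =>
      hm.eq_zero_of_forall_characterVectors_inner_eq_zero fun g hg => ?_
    have h := (Submodule.mem_orthogonal _ z).mp hz _ (Submodule.subset_span ⟨⟨g, hg⟩, rfl⟩)
    simpa [inner_smul_left, hg.1] using h

theorem characterHilbertBasis_repr_apply (hm : IsCommHStarMul m) (x : H)
    (g : characterVectors m) :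
    hm.characterHilbertBasis.repr x g = (‖(g : H)‖⁻¹ : ℂ) * ⟪(g : H), x⟫ := by
  simp [characterHilbertBasis, HilbertBasis.repr_apply_apply, inner_smul_left]

theorem characterHilbertBasis_repr_mul (hm : IsCommHStarMul m) (x y : H)
    (g : characterVectors m) :
    hm.characterHilbertBasis.repr (m x y) g =
      ‖(g : H)‖ * hm.characterHilbertBasis.repr x g * hm.characterHilbertBasis.repr y g := by
  have : (‖(g : H)‖ : ℂ) ≠ 0 := by simpa using g.2.1
  simp only [characterHilbertBasis_repr_apply, g.2.2 x y]
  field_simp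

end IsCommHStarMul

end ContinuousLinearMap

open ContinuousLinearMap in
theorem ambrose_structure_theorem_general
    (H : Type) [NormedAddCommGroup H] [InnerProductSpace ℂ H] [CompleteSpace H]
    (m : H →L[ℂ] H →L[ℂ] H)
    (hcomm : ∀ x y : H, m x y = m y x)
    (hassoc : ∀ x y z : H, m (m x y) z = m x (m y z))
    (hann : ∀ x : H, (∀ y : H, m x y = 0) → x = 0)
    (hadj : ∀ x : H, ∃ xs : H, ∀ y z : H,
      (inner ℂ (m x y) z : ℂ) = inner ℂ y (m xs z)) :
    ∃ (ι : Type) (lam : ι → ℂ), (∀ i, lam i ≠ 0) ∧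
      ∃ U : H ≃ₗᵢ[ℂ] lp (fun _ : ι => ℂ) 2,
        ∀ (x y : H) (i : ι), U (m x y) i = lam i * U x i * U y i := by
  have hm : IsCommHStarMul m := ⟨hcomm, hassoc, hann, hadj⟩
  exact ⟨characterVectors m, fun g => ‖(g : H)‖, fun g => by simpa using g.2.1,
    hm.characterHilbertBasis.repr, hm.characterHilbertBasis_repr_mul⟩

/-- Ambrose's structure theorem: a nonzero complex Hilbert space `H`
with a continuous bilinear multiplication `m` making it a commutative associative
(not necessarily unital) Banach algebra with trivial annihilator, such that every
`x` admits an adjoint element `x*` with `⟪x·y, z⟫ = ⟪y, x*·z⟫`, is isomorphic as an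
H*-algebra to a Hilbert space (`lp`-2) direct sum of one-dimensional algebras. -/
theorem ambrose_structure_theorem
    (H : Type) [NormedAddCommGroup H] [InnerProductSpace ℂ H] [CompleteSpace H]
    [Nontrivial H]
    (m : H →L[ℂ] H →L[ℂ] H)
    (hcomm : ∀ x y : H, m x y = m y x)
    (hassoc : ∀ x y z : H, m (m x y) z = m x (m y z))
    (hann : ∀ x : H, (∀ y : H, m x y = 0) → x = 0)
    (hadj : ∀ x : H, ∃ xs : H, ∀ y z : H,
      (inner ℂ (m x y) z : ℂ) = inner ℂ y (m xs z)) :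
    ∃ (ι : Type) (lam : ι → ℂ), (∀ i, lam i ≠ 0) ∧
      ∃ U : H ≃ₗᵢ[ℂ] lp (fun _ : ι => ℂ) 2,
        ∀ (x y : H) (i : ι), U (m x y) i = lam i * U x i * U y i :=
  ambrose_structure_theorem_general H m hcomm hassoc hann hadj
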